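/- Let π be a unitary representation of a discrete group Γ on a Hilbert space K, K^π the space of π-invariant vectors, and p_π the orthogonal projection onto K^π. Then π fails to have a spectral gap if and only if there exists a state ψ on L(K) with ψ(π_t) = 1 for every t ∈ Γ and ψ(p_π) = 0. -/

import Mathlib

/-! If there are almost invariant unit vectors `ξᵢ` orthogonal to `K^π`, an ultrafilter limit of
the vector states `x ↦ ⟪ξᵢ, x ξᵢ⟫` is a state equal to `1` on every `π t` and to `0` on `p`.
Conversely, a gap `(ε, F)` yields the operator inequality `ε² (1 - p) ≤ ∑_{t ∈ F} (π t - 1)* (π t - 1)`.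
A state with `ψ (π t) = 1` for all `t` (hence also `ψ (π t)* = ψ (π t⁻¹) = 1`) vanishes on the
right-hand side, while `ψ p = 0` makes it equal to `ε²` on the left-hand side, contradicting
positivity. -/

open ComplexOrder

/-- `π` has a spectral gap: there is no net (equivalently, ε-F family) of almost-invariant
unit vectors orthogonal to the space `K^π` of `π`-invariant vectors. -/
def HasSpectralGap {Γ : Type*} [Group Γ]
    {K : Type*} [NormedAddCommGroup K] [InnerProductSpace ℂ K] [CompleteSpace K]
    (π : Γ →* unitary (K →L[ℂ] K)) : Prop :=
  ¬ (∀ ε > (0 : ℝ), ∀ F : Finset Γ, ∃ ξ : K, ‖ξ‖ = 1 ∧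
      (∀ η : K, (∀ t : Γ, (π t : K →L[ℂ] K) η = η) → (inner ℂ ξ η : ℂ) = 0) ∧
      ∀ t ∈ F, ‖(π t : K →L[ℂ] K) ξ - ξ‖ < ε)

open Filter Topology

lemma map_nonneg_of_map_star_mul_self_nonneg {R S F : Type*} [NonUnitalSemiring R]
    [PartialOrder R] [StarRing R] [StarOrderedRing R] [AddCommMonoid S] [PartialOrder S]
    [IsOrderedAddMonoid S] [FunLike F R S] [AddMonoidHomClass F R S] (f : F)
    (hf : ∀ x, 0 ≤ f (star x * x)) {a : R} (ha : 0 ≤ a) : 0 ≤ f a := by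
  rw [StarOrderedRing.nonneg_iff] at ha
  induction ha using AddSubmonoid.closure_induction with
  | mem x hx => obtain ⟨s, rfl⟩ := hx; exact hf s
  | zero => simp
  | add x y _ _ hx hy => rw [map_add]; exact add_nonneg hx hy

lemma map_star_sub_one_mul_sub_one {R S F : Type*} [Ring R] [StarRing R] [AddCommGroup S]
    [FunLike F R S] [AddMonoidHomClass F R S] (f : F) {u : R} (hu : star u * u = 1)
    (hfu : f u = f 1) (hfu' : f (star u) = f 1) : f (star (u - 1) * (u - 1)) = 0 := by
  have : star (u - 1) * (u - 1) = (1 - star u) - (u - 1) := by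
    rw [star_sub, star_one, sub_mul, mul_sub, mul_sub, hu]; noncomm_ring
  rw [this, map_sub, map_sub, map_sub, hfu, hfu']
  abel

lemma exists_linearMap_tendsto_of_bounded {𝕜 E G ι : Type*} [NormedField 𝕜] [AddCommGroup E]
    [Module 𝕜 E] [NormedAddCommGroup G] [NormedSpace 𝕜 G] [ProperSpace G]
    (φ : ι → E →ₗ[𝕜] G) (U : Ultrafilter ι) (hφ : ∀ x, ∃ C, ∀ i, ‖φ i x‖ ≤ C) :
    ∃ L : E →ₗ[𝕜] G, ∀ x, Tendsto (fun i => φ i x) U (𝓝 (L x)) := by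
  have hlim : ∀ x, ∃ c, Tendsto (fun i => φ i x) U (𝓝 c) := fun x => by
    obtain ⟨C, hC⟩ := hφ x
    obtain ⟨c, -, hc⟩ := (isCompact_closedBall (0 : G) C).ultrafilter_le_nhds
      (U.map fun i => φ i x) (by
        rw [Ultrafilter.coe_map, le_principal_iff]
        exact mem_map.2 (univ_mem' fun i => mem_closedBall_zero_iff.2 (hC i)))
    exact ⟨c, hc⟩
  choose L hL using hlim
  refine ⟨{ toFun := L, map_add' := fun x y => ?_, map_smul' := fun c x => ?_ }, hL⟩
  · refine tendsto_nhds_unique (hL (x + y)) ?_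
    simpa using (hL x).add (hL y)
  · refine tendsto_nhds_unique (hL (c • x)) ?_
    simpa using (hL x).const_smul c

lemma eq_zero_of_smul_one_sub_le_sum_of_map_eq_one {A ι : Type*} [Ring A] [PartialOrder A]
    [StarRing A] [StarOrderedRing A] [Module ℂ A] (ψ : A →ₗ[ℂ] ℂ)
    (hψ_pos : ∀ x, 0 ≤ ψ (star x * x)) (hψ_one : ψ 1 = 1) {p : A} (hψ_p : ψ p = 0) {s : Finset ι}
    {u : ι → A} (hu : ∀ i, star (u i) * u i = 1) (hψ_u : ∀ i, ψ (u i) = 1)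
    (hψ_star_u : ∀ i, ψ (star (u i)) = 1) {ε : ℝ}
    (hle : (ε : ℂ) ^ 2 • (1 - p) ≤ ∑ i ∈ s, star (u i - 1) * (u i - 1)) : ε = 0 := by
  have hvanish : ∀ i, ψ (star (u i - 1) * (u i - 1)) = 0 := fun i =>
    map_star_sub_one_mul_sub_one ψ (hu i) (by rw [hψ_u, hψ_one]) (by rw [hψ_star_u, hψ_one])
  have hψ_le := map_nonneg_of_map_star_mul_self_nonneg ψ hψ_pos (sub_nonneg.2 hle)
  simp only [map_sub, map_sum, hvanish, map_smul, hψ_one, hψ_p, Finset.sum_const_zero,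
    sub_zero, smul_eq_mul, mul_one, zero_sub] at hψ_le
  have : (0 : ℝ) ≤ -ε ^ 2 := Complex.zero_le_real.1 (by push_cast; exact hψ_le)
  nlinarith

section VectorState

variable {K : Type*} [NormedAddCommGroup K] [InnerProductSpace ℂ K]

noncomputable def vectorState (ξ : K) : (K →L[ℂ] K) →L[ℂ] ℂ :=
  (innerSL ℂ ξ).comp (ContinuousLinearMap.apply ℂ K ξ)

@[simp]
lemma vectorState_apply (ξ : K) (x : K →L[ℂ] K) : vectorState ξ x = inner ℂ ξ (x ξ) := rfl

lemma norm_vectorState_apply_le (ξ : K) (x : K →L[ℂ] K) : ‖vectorState ξ x‖ ≤ ‖ξ‖ * ‖x‖ * ‖ξ‖ :=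
  calc ‖vectorState ξ x‖ ≤ ‖ξ‖ * ‖x ξ‖ := norm_inner_le_norm _ _
    _ ≤ ‖ξ‖ * (‖x‖ * ‖ξ‖) := by gcongr; exact x.le_opNorm ξ
    _ = ‖ξ‖ * ‖x‖ * ‖ξ‖ := by ring

lemma vectorState_one (ξ : K) : vectorState ξ 1 = (‖ξ‖ ^ 2 : ℂ) := by
  simp [inner_self_eq_norm_sq_to_K]

lemma vectorState_star_mul_self [CompleteSpace K] (ξ : K) (x : K →L[ℂ] K) :
    vectorState ξ (star x * x) = (‖x ξ‖ ^ 2 : ℂ) := by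
  rw [vectorState_apply, mul_apply_eq_comp, ContinuousLinearMap.star_eq_adjoint,
    ContinuousLinearMap.adjoint_inner_right, inner_self_eq_norm_sq_to_K]
  rfl

lemma norm_vectorState_sub_one_le {ξ : K} (hξ : ‖ξ‖ = 1) (u : K →L[ℂ] K) :
    ‖vectorState ξ u - 1‖ ≤ ‖u ξ - ξ‖ := by
  have : vectorState ξ u - 1 = inner ℂ ξ (u ξ - ξ) := by
    rw [inner_sub_right, inner_self_eq_norm_sq_to_K, hξ]; simp
  rw [this]
  exact (norm_inner_le_norm _ _).trans_eq (by rw [hξ, one_mul])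

lemma tendsto_vectorState_of_tendsto_sub {ι : Type*} {l : Filter ι} {ξ : ι → K}
    (hξ : ∀ i, ‖ξ i‖ = 1) {u : K →L[ℂ] K} (hu : Tendsto (fun i => u (ξ i) - ξ i) l (𝓝 0)) :
    Tendsto (fun i => vectorState (ξ i) u) l (𝓝 1) := by
  rw [tendsto_iff_norm_sub_tendsto_zero]
  exact squeeze_zero (fun _ => norm_nonneg _) (fun i => norm_vectorState_sub_one_le (hξ i) u)
    (tendsto_zero_iff_norm_tendsto_zero.1 hu)

lemma exists_state_tendsto_vectorState [CompleteSpace K] {ι : Type*} {ξ : ι → K}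
    (hξ : ∀ i, ‖ξ i‖ = 1) (U : Ultrafilter ι) :
    ∃ ψ : (K →L[ℂ] K) →ₗ[ℂ] ℂ, (∀ x, 0 ≤ ψ (star x * x)) ∧ ψ 1 = 1 ∧
      ∀ x, Tendsto (fun i => vectorState (ξ i) x) U (𝓝 (ψ x)) := by
  obtain ⟨ψ, hψ⟩ := exists_linearMap_tendsto_of_bounded (fun i => (vectorState (ξ i)).toLinearMap)
    U fun x => ⟨‖x‖, fun i => by simpa [hξ i] using norm_vectorState_apply_le (ξ i) x⟩
  refine ⟨ψ, fun x => ge_of_tendsto' (hψ _) fun i => ?_, ?_, hψ⟩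
  · simp only [ContinuousLinearMap.coe_coe, vectorState_star_mul_self]
    exact pow_nonneg (Complex.zero_le_real.2 (norm_nonneg _)) 2
  · refine tendsto_nhds_unique (hψ 1) ?_
    simp only [ContinuousLinearMap.coe_coe, vectorState_one, hξ, Complex.ofReal_one, one_pow]
    exact tendsto_const_nhds

end VectorState

section Projection

variable {𝕜 K : Type*} [RCLike 𝕜] [NormedAddCommGroup K] [InnerProductSpace 𝕜 K]

lemma sq_mul_norm_le_sum_of_forall_norm_eq_one {ι : Type*} {s : Finset ι} {T : ι → K →L[𝕜] K}
    {V : Submodule 𝕜 K} {ε : ℝ} (hε : 0 ≤ ε) (h : ∀ ξ ∈ V, ‖ξ‖ = 1 → ∃ i ∈ s, ε ≤ ‖T i ξ‖)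
    {r : K} (hr : r ∈ V) : (ε * ‖r‖) ^ 2 ≤ ∑ i ∈ s, ‖T i r‖ ^ 2 := by
  rcases eq_or_ne r 0 with rfl | hr0
  · simp
  have hpos : 0 < ‖r‖ := norm_pos_iff.2 hr0
  obtain ⟨i, hi, hεi⟩ := h ((‖r‖⁻¹ : 𝕜) • r) (V.smul_mem _ hr) (norm_smul_inv_norm hr0)
  have hεr : ε * ‖r‖ ≤ ‖T i r‖ := by
    rw [map_smul, norm_smul, norm_inv, RCLike.norm_ofReal, abs_norm] at hεi
    rwa [← le_div_iff₀ hpos, div_eq_inv_mul]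
  calc (ε * ‖r‖) ^ 2 ≤ ‖T i r‖ ^ 2 := by gcongr
    _ ≤ ∑ i ∈ s, ‖T i r‖ ^ 2 := Finset.single_le_sum (fun i _ => sq_nonneg ‖T i r‖) hi

variable [CompleteSpace K]

lemma IsStarProjection.apply_eq_zero_iff {p : K →L[𝕜] K} (hp : IsStarProjection p) {ξ : K} :
    p ξ = 0 ↔ ∀ η, p η = η → inner 𝕜 ξ η = 0 := by
  have hsym : ∀ v w, inner 𝕜 (p v) w = inner 𝕜 v (p w) :=
    ContinuousLinearMap.isSelfAdjoint_iff_isSymmetric.mp hp.isSelfAdjoint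
  have hpp : ∀ ζ, p (p ζ) = p ζ := fun ζ => congr($(hp.isIdempotentElem) ζ)
  refine ⟨fun h η hη => by rw [← hη, ← hsym, h, inner_zero_left], fun h => ?_⟩
  rw [← inner_self_eq_zero (𝕜 := 𝕜), hsym, hpp, h _ (hpp ξ)]

lemma ContinuousLinearMap.star_mul_self_le_sum {ι : Type*} (s : Finset ι) (S : K →L[𝕜] K)
    (T : ι → K →L[𝕜] K) (h : ∀ ζ, ‖S ζ‖ ^ 2 ≤ ∑ i ∈ s, ‖T i ζ‖ ^ 2) :
    star S * S ≤ ∑ i ∈ s, star (T i) * T i := by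
  have hnorm : ∀ (A : K →L[𝕜] K) ζ, RCLike.re (inner 𝕜 ((star A * A) ζ) ζ) = ‖A ζ‖ ^ 2 :=
    fun A ζ => (A.apply_norm_sq_eq_inner_adjoint_left ζ).symm
  rw [le_def, isPositive_def']
  refine ⟨(isSelfAdjoint_sum s fun i _ => .star_mul_self (T i)).sub (.star_mul_self S), fun ζ => ?_⟩
  simp only [reApplyInnerSelf_apply, sub_apply, inner_sub_left, sum_apply, sum_inner, map_sub,
    map_sum, hnorm]
  linarith [h ζ]

lemma IsStarProjection.smul_one_sub_le_sum {p : K →L[𝕜] K} (hp : IsStarProjection p)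
    {ι : Type*} {s : Finset ι} {T : ι → K →L[𝕜] K} (hTp : ∀ i, T i * p = 0) {ε : ℝ} (hε : 0 ≤ ε)
    (h : ∀ ξ, p ξ = 0 → ‖ξ‖ = 1 → ∃ i ∈ s, ε ≤ ‖T i ξ‖) :
    (ε : 𝕜) ^ 2 • (1 - p) ≤ ∑ i ∈ s, star (T i) * T i := by
  have hS : star ((ε : 𝕜) • (1 - p)) * ((ε : 𝕜) • (1 - p)) = (ε : 𝕜) ^ 2 • (1 - p) := by
    rw [star_smul, smul_mul_smul, hp.one_sub.isSelfAdjoint.star_eq, hp.one_sub.isIdempotentElem.eq,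
      RCLike.star_def, RCLike.conj_ofReal, sq]
  rw [← hS]
  refine ContinuousLinearMap.star_mul_self_le_sum s _ T fun ζ => ?_
  have hT : ∀ i, T i ((1 - p) ζ) = T i ζ := fun i => by
    rw [← mul_apply_eq_comp, mul_sub, mul_one, hTp, sub_zero]
  have hker : (1 - p) ζ ∈ LinearMap.ker (p : K →ₗ[𝕜] K) := by
    rw [LinearMap.mem_ker, ContinuousLinearMap.coe_coe, ← mul_apply_eq_comp, hp.mul_one_sub_self]
    rfl
  simp_rw [← hT]
  simpa [norm_smul, abs_of_nonneg hε] using sq_mul_norm_le_sum_of_forall_norm_eq_one hε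
    h hker

end Projection

lemma exists_almost_invariant_of_not_hasSpectralGap {Γ K : Type*} [Group Γ]
    [NormedAddCommGroup K] [InnerProductSpace ℂ K] [CompleteSpace K] {π : Γ →* unitary (K →L[ℂ] K)}
    (h : ¬ HasSpectralGap π) :
    ∃ ξ : ℕ × Finset Γ → K, (∀ i, ‖ξ i‖ = 1) ∧
      (∀ i η, (∀ t, (π t : K →L[ℂ] K) η = η) → inner ℂ (ξ i) η = 0) ∧
      ∀ t, Tendsto (fun i => (π t : K →L[ℂ] K) (ξ i) - ξ i) atTop (𝓝 0) := by
  rw [HasSpectralGap, not_not] at h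
  choose ξ hξ_norm hξ_orth hξ_small using
    fun i : ℕ × Finset Γ => h (1 / (i.1 + 1)) Nat.one_div_pos_of_nat i.2
  refine ⟨ξ, hξ_norm, hξ_orth, fun t => ?_⟩
  rw [tendsto_zero_iff_norm_tendsto_zero]
  refine squeeze_zero' (.of_forall fun _ => norm_nonneg _) ?_
    (tendsto_one_div_add_atTop_nhds_zero_nat.comp
      (tendsto_atTop_atTop_of_monotone monotone_fst fun n => ⟨(n, ∅), le_rfl⟩))
  filter_upwards [eventually_ge_atTop (0, {t})] with i hi
  exact (hξ_small i t (hi.2 (Finset.mem_singleton_self t))).le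

/-- `π` fails to have a spectral gap if and only if there is a state `ψ` on
`L(K)` with `ψ (π t) = 1` for every `t ∈ Γ` and `ψ p_π = 0`, where `p_π` is the orthogonal
projection onto the invariant vectors (characterised as the self-adjoint idempotent whose
fixed vectors are exactly the `π`-invariant vectors). -/
theorem not_hasSpectralGap_iff_exists_state_vanishing_on_proj
    {Γ : Type*} [Group Γ]
    {K : Type*} [NormedAddCommGroup K] [InnerProductSpace ℂ K] [CompleteSpace K]
    (π : Γ →* unitary (K →L[ℂ] K))
    (p : K →L[ℂ] K) (hsa : IsSelfAdjoint p) (hidem : p * p = p)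
    (hfix : ∀ ξ : K, p ξ = ξ ↔ ∀ t : Γ, (π t : K →L[ℂ] K) ξ = ξ) :
    ¬ HasSpectralGap π ↔
      ∃ ψ : (K →L[ℂ] K) →ₗ[ℂ] ℂ,
        (∀ x : K →L[ℂ] K, 0 ≤ ψ (star x * x)) ∧ ψ 1 = 1 ∧
        (∀ t : Γ, ψ (π t : K →L[ℂ] K) = 1) ∧ ψ p = 0 := by
  classical
  have hp : IsStarProjection p := ⟨hidem, hsa⟩
  have hker : ∀ ξ, p ξ = 0 ↔ ∀ η, (∀ t, (π t : K →L[ℂ] K) η = η) → inner ℂ ξ η = 0 := by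
    simpa only [hfix] using fun ξ => hp.apply_eq_zero_iff (ξ := ξ)
  constructor
  · intro h
    obtain ⟨ξ, hξ_norm, hξ_orth, hξ_inv⟩ := exists_almost_invariant_of_not_hasSpectralGap h
    obtain ⟨ψ, hψ_pos, hψ_one, hψ⟩ := exists_state_tendsto_vectorState hξ_norm (.of atTop)
    refine ⟨ψ, hψ_pos, hψ_one, fun t => tendsto_nhds_unique (hψ _) ?_, tendsto_nhds_unique (hψ p) ?_⟩
    · exact (tendsto_vectorState_of_tendsto_sub hξ_norm (hξ_inv t)).mono_left (Ultrafilter.of_le _)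
    · simp [(hker _).2 (hξ_orth _)]
  · rintro ⟨ψ, hψ_pos, hψ_one, hψ_π, hψ_p⟩ hgap
    rw [HasSpectralGap] at hgap
    push Not at hgap
    obtain ⟨ε, hε, F, hF⟩ := hgap
    have hπp : ∀ t, ((π t : K →L[ℂ] K) - 1) * p = 0 := fun t => by
      ext ξ
      simpa [sub_eq_zero] using (hfix _).1 congr($hidem ξ) t
    have hle := hp.smul_one_sub_le_sum hπp hε.le fun ξ hξ hξ1 => hF ξ hξ1 ((hker ξ).1 hξ)
    refine hε.ne' (eq_zero_of_smul_one_sub_le_sum_of_map_eq_one ψ hψ_pos hψ_one hψ_p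
      (fun t => Unitary.coe_star_mul_self (π t)) hψ_π (fun t => ?_) hle)
    rw [← Unitary.coe_star, Unitary.star_eq_inv, ← map_inv, hψ_π]
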